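/- (Linearization of the nonlinear Fourier transform: b is the Fourier transform to third order.) Let x ∈ ℝ, let f : [0,∞) → ℂ be locally integrable, and let a, b : [0,∞) → ℂ be differentiable functions satisfying a'(t) = e^{2ixt} conj(f(t)) conj(b(t)), b'(t) = e^{2ixt} conj(f(t)) conj(a(t)), with a(0) = 1 and b(0) = 0. Then for every t ≥ 0, writing F(t) := ∫_0^t |f(s)| ds, one has | b(t) − ∫_0^t e^{2ixs} conj(f(s)) ds | ≤ sinh(F(t)) − F(t); in particular, if F(t) ≤ 1 then the left-hand side is at most F(t)³. -/

import Mathlib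

/-! Put `k s = e^{2ixs} conj (f s)` and `G s = ∫₀ˢ |k|`. By the fundamental theorem of
calculus, `b`, `a - 1` and `b - ∫₀ᵗ k` are integrals of `k` against the conjugates of `a`, `b`
and `a - 1`. Since `G` is absolutely continuous with `G' = |k|` a.e., a pointwise bound
`|w| ≤ h' ∘ G` gives `|∫₀ˢ k conj w| ≤ h (G s) - h 0`. Starting from a crude bound `|a| ≤ C` on
`[0, t]`, one round of this for `b` and one for `a` turn `|a| ≤ cosh G + C G²ⁿ/(2n)!` into the
same bound with `n + 1`, so `|a| ≤ cosh G`. Then `|b| ≤ sinh G`, `|a - 1| ≤ cosh G - 1` and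
`|b - ∫₀ᵗ k| ≤ sinh G - G`. -/

open MeasureTheory Complex

open Set Filter
open scoped NNReal Topology ComplexConjugate

theorem LipschitzOnWith.comp_absolutelyContinuousOnInterval {X Y : Type*}
    [PseudoMetricSpace X] [PseudoMetricSpace Y] {h : X → Y} {f : ℝ → X} {K : ℝ≥0} {s : Set X}
    {a b : ℝ} (hh : LipschitzOnWith K h s) (hf : AbsolutelyContinuousOnInterval f a b)
    (hfs : MapsTo f (uIcc a b) s) : AbsolutelyContinuousOnInterval (h ∘ f) a b := by
  unfold AbsolutelyContinuousOnInterval at hf ⊢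
  have hK := mul_zero (K : ℝ) ▸ hf.const_mul (K : ℝ)
  refine squeeze_zero'
    (Eventually.of_forall fun _ ↦ Finset.sum_nonneg fun _ _ ↦ dist_nonneg) ?_ hK
  filter_upwards [mem_inf_of_right (mem_principal_self _)] with E hE
  rw [Finset.mul_sum]
  exact Finset.sum_le_sum fun i hi ↦
    hh.dist_le_mul _ (hfs (hE.1 i hi).1) _ (hfs (hE.1 i hi).2)

theorem AbsolutelyContinuousOnInterval.integral_comp_mul_deriv {f h h' : ℝ → ℝ} {a b : ℝ}
    (hf : AbsolutelyContinuousOnInterval f a b) (hh : ∀ y, HasDerivAt h (h' y) y)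
    (hh' : Continuous h') :
    ∫ x in a..b, h' (f x) * deriv f x = h (f b) - h (f a) := by
  have hC1 : ContDiff ℝ 1 h := contDiff_one_iff_deriv.2
    ⟨fun y ↦ (hh y).differentiableAt, (funext fun y ↦ (hh y).deriv) ▸ hh'⟩
  obtain ⟨K, hK⟩ := hC1.locallyLipschitz.locallyLipschitzOn.exists_lipschitzOnWith_of_compact
    (isCompact_uIcc.image_of_continuousOn hf.continuousOn)
  refine (intervalIntegral.integral_congr_ae ?_).trans
    (hK.comp_absolutelyContinuousOnInterval hf (mapsTo_image _ _)).integral_deriv_eq_sub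
  filter_upwards [hf.ae_differentiableAt] with x hx hxab
  exact ((hh (f x)).comp x (hx (uIoc_subset_uIcc hxab)).hasDerivAt).deriv.symm

theorem intervalIntegral.integral_comp_primitive_mul {φ h h' : ℝ → ℝ} {a b : ℝ}
    (hφ : IntervalIntegrable φ volume a b) (hh : ∀ y, HasDerivAt h (h' y) y)
    (hh' : Continuous h') :
    ∫ x in a..b, h' (∫ u in a..x, φ u) * φ x = h (∫ u in a..b, φ u) - h 0 := by
  have hG := hφ.absolutelyContinuousOnInterval_intervalIntegral left_mem_uIcc
  rw [← integral_same (f := φ) (a := a), ← hG.integral_comp_mul_deriv hh hh']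
  refine integral_congr_ae ?_
  filter_upwards [hφ.ae_hasDerivAt_integral] with x hx hxab
  rw [(hx (uIoc_subset_uIcc hxab) a left_mem_uIcc).deriv]

theorem intervalIntegral.norm_integral_mul_le_of_norm_le_comp_primitive {𝕜 : Type*}
    [RCLike 𝕜] {k w : ℝ → 𝕜} {h h' : ℝ → ℝ} {a b : ℝ} (hab : a ≤ b)
    (hk : IntervalIntegrable k volume a b) (hw : ContinuousOn w (Icc a b))
    (hh : ∀ y, HasDerivAt h (h' y) y) (hh' : Continuous h')
    (hwh : ∀ x ∈ Icc a b, ‖w x‖ ≤ h' (∫ u in a..x, ‖k u‖)) :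
    ‖∫ x in a..b, k x * w x‖ ≤ h (∫ u in a..b, ‖k u‖) - h 0 := by
  have hG : ContinuousOn (fun x ↦ ∫ u in a..x, ‖k u‖) (uIcc a b) :=
    continuousOn_primitive_interval' hk.norm left_mem_uIcc
  calc ‖∫ x in a..b, k x * w x‖ ≤ ∫ x in a..b, ‖k x‖ * ‖w x‖ := by
        simpa only [norm_mul] using norm_integral_le_integral_norm (f := fun x ↦ k x * w x) hab
    _ ≤ ∫ x in a..b, h' (∫ u in a..x, ‖k u‖) * ‖k x‖ := by
        refine integral_mono_on hab (hk.norm.mul_continuousOn (uIcc_of_le hab ▸ hw.norm))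
          (hk.norm.continuousOn_mul (hh'.comp_continuousOn hG)) fun x hx ↦ ?_
        rw [mul_comm]
        exact mul_le_mul_of_nonneg_right (hwh x hx) (norm_nonneg _)
    _ = h (∫ u in a..b, ‖k u‖) - h 0 := integral_comp_primitive_mul hk.norm hh hh'

theorem intervalIntegral.sub_eq_integral_mul_conj_of_hasDerivAt {k F W : ℝ → ℂ} {t s : ℝ}
    (hk : IntervalIntegrable k volume 0 t) (hW : ContinuousOn W (Icc 0 t))
    (hF : ∀ u ∈ Icc 0 t, HasDerivAt F (k u * conj (W u)) u) (hs : s ∈ Icc 0 t) :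
    F s - F 0 = ∫ u in 0..s, k u * conj (W u) := by
  have hsub : Icc 0 s ⊆ Icc 0 t := Icc_subset_Icc_right hs.2
  have hks : IntervalIntegrable k volume 0 s :=
    hk.mono_set (uIcc_subset_uIcc_left (by rwa [uIcc_of_le (hs.1.trans hs.2)]))
  refine (integral_eq_sub_of_hasDerivAt (fun u hu ↦ hF u (hsub (uIcc_of_le hs.1 ▸ hu))) ?_).symm
  exact hks.mul_continuousOn (uIcc_of_le hs.1 ▸ continuous_conj.comp_continuousOn (hW.mono hsub))

theorem norm_sub_le_of_hasDerivAt_mul_conj {k F W : ℝ → ℂ} {h h' : ℝ → ℝ} {t s : ℝ}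
    (hk : IntervalIntegrable k volume 0 t) (hW : ContinuousOn W (Icc 0 t))
    (hF : ∀ u ∈ Icc 0 t, HasDerivAt F (k u * conj (W u)) u)
    (hh : ∀ y, HasDerivAt h (h' y) y) (hh' : Continuous h')
    (hWh : ∀ u ∈ Icc 0 t, ‖W u‖ ≤ h' (∫ v in 0..u, ‖k v‖)) (hs : s ∈ Icc 0 t) :
    ‖F s - F 0‖ ≤ h (∫ v in 0..s, ‖k v‖) - h 0 := by
  rw [intervalIntegral.sub_eq_integral_mul_conj_of_hasDerivAt hk hW hF hs]
  have hsub : Icc 0 s ⊆ Icc 0 t := Icc_subset_Icc_right hs.2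
  refine intervalIntegral.norm_integral_mul_le_of_norm_le_comp_primitive hs.1
    (hk.mono_set (uIcc_subset_uIcc_left (by rwa [uIcc_of_le (hs.1.trans hs.2)])))
    (continuous_conj.comp_continuousOn (hW.mono hsub)) hh hh' fun u hu ↦ ?_
  simpa only [Function.comp_apply, RCLike.norm_conj] using hWh u (hsub hu)

theorem hasDerivAt_pow_succ_div_factorial (m : ℕ) (y : ℝ) :
    HasDerivAt (fun y : ℝ ↦ y ^ (m + 1) / (m + 1).factorial) (y ^ m / m.factorial) y := by
  refine ((hasDerivAt_pow (m + 1) y).div_const _).congr_deriv ?_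
  rw [Nat.factorial_succ, Nat.add_sub_cancel]
  push_cast
  field_simp

theorem Real.sinh_sub_self_le_pow_three {y : ℝ} (h0 : 0 ≤ y) (h1 : y ≤ 1) :
    Real.sinh y - y ≤ y ^ 3 := by
  have hpos := Real.exp_bound (x := y) (by rwa [abs_of_nonneg h0]) (n := 3) (by norm_num)
  have hneg := Real.exp_bound (x := -y) (by rwa [abs_neg, abs_of_nonneg h0]) (n := 3)
    (by norm_num)
  simp only [Finset.sum_range_succ, Finset.sum_range_zero, abs_neg, abs_of_nonneg h0] at hpos hneg
  rw [Real.sinh_eq]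
  norm_num [Nat.factorial] at hpos hneg
  nlinarith [abs_le.1 hpos, abs_le.1 hneg, pow_nonneg h0 3]

-- With `k s = exp (2 i x s) * conj (f s)` this is the system defining the nonlinear Fourier
-- transform data `(a, b)` of `f` at `x`, on the interval `[0, t]`.
structure SolvesNLFTSystem (k a b : ℝ → ℂ) (t : ℝ) : Prop where
  intervalIntegrable : IntervalIntegrable k volume 0 t
  hasDerivAt_a : ∀ s ∈ Icc 0 t, HasDerivAt a (k s * conj (b s)) s
  hasDerivAt_b : ∀ s ∈ Icc 0 t, HasDerivAt b (k s * conj (a s)) s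
  a_zero : a 0 = 1
  b_zero : b 0 = 0

namespace SolvesNLFTSystem

variable {k a b : ℝ → ℂ} {t : ℝ}

theorem continuousOn_a (hS : SolvesNLFTSystem k a b t) : ContinuousOn a (Icc 0 t) :=
  fun s hs ↦ (hS.hasDerivAt_a s hs).continuousAt.continuousWithinAt

theorem continuousOn_b (hS : SolvesNLFTSystem k a b t) : ContinuousOn b (Icc 0 t) :=
  fun s hs ↦ (hS.hasDerivAt_b s hs).continuousAt.continuousWithinAt

theorem norm_b_le (hS : SolvesNLFTSystem k a b t) (C : ℝ) (m : ℕ)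
    (ha : ∀ u ∈ Icc 0 t, ‖a u‖ ≤
      Real.cosh (∫ v in 0..u, ‖k v‖) + C * ((∫ v in 0..u, ‖k v‖) ^ m / m.factorial))
    {s : ℝ} (hs : s ∈ Icc 0 t) :
    ‖b s‖ ≤ Real.sinh (∫ v in 0..s, ‖k v‖) +
      C * ((∫ v in 0..s, ‖k v‖) ^ (m + 1) / (m + 1).factorial) := by
  simpa [hS.b_zero] using norm_sub_le_of_hasDerivAt_mul_conj hS.intervalIntegrable
    hS.continuousOn_a hS.hasDerivAt_b
    (fun y ↦ (Real.hasDerivAt_sinh y).add ((hasDerivAt_pow_succ_div_factorial m y).const_mul C))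
    (by fun_prop) ha hs

theorem norm_a_sub_one_le (hS : SolvesNLFTSystem k a b t) (C : ℝ) (m : ℕ)
    (hb : ∀ u ∈ Icc 0 t, ‖b u‖ ≤
      Real.sinh (∫ v in 0..u, ‖k v‖) + C * ((∫ v in 0..u, ‖k v‖) ^ m / m.factorial))
    {s : ℝ} (hs : s ∈ Icc 0 t) :
    ‖a s - 1‖ ≤ Real.cosh (∫ v in 0..s, ‖k v‖) - 1 +
      C * ((∫ v in 0..s, ‖k v‖) ^ (m + 1) / (m + 1).factorial) := by
  have := norm_sub_le_of_hasDerivAt_mul_conj hS.intervalIntegrable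
    hS.continuousOn_b hS.hasDerivAt_a
    (fun y ↦ (Real.hasDerivAt_cosh y).add ((hasDerivAt_pow_succ_div_factorial m y).const_mul C))
    (by fun_prop) hb hs
  simp only [hS.a_zero, Pi.add_apply, Real.cosh_zero, ne_eq, Nat.add_eq_zero_iff, one_ne_zero,
    and_false, not_false_eq_true, zero_pow, zero_div, mul_zero, add_zero] at this
  linarith

theorem norm_a_le_cosh_add (hS : SolvesNLFTSystem k a b t) {C : ℝ}
    (hC : ∀ s ∈ Icc 0 t, ‖a s‖ ≤ C) (n : ℕ) {s : ℝ} (hs : s ∈ Icc 0 t) :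
    ‖a s‖ ≤ Real.cosh (∫ v in 0..s, ‖k v‖) +
      C * ((∫ v in 0..s, ‖k v‖) ^ (2 * n) / (2 * n).factorial) := by
  induction n generalizing s with
  | zero => simpa using (hC s hs).trans (le_add_of_nonneg_left (Real.cosh_pos _).le)
  | succ n ih =>
    have hb u (hu : u ∈ Icc 0 t) := hS.norm_b_le C (2 * n) (fun _ hv ↦ ih hv) hu
    have ha1 := hS.norm_a_sub_one_le C (2 * n + 1) hb hs
    have := norm_le_norm_add_norm_sub' (a s) 1
    rw [norm_one] at this
    rw [show 2 * (n + 1) = 2 * n + 1 + 1 by ring]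
    linarith

theorem norm_a_le_cosh (hS : SolvesNLFTSystem k a b t) {s : ℝ} (hs : s ∈ Icc 0 t) :
    ‖a s‖ ≤ Real.cosh (∫ v in 0..s, ‖k v‖) := by
  obtain ⟨C, hC⟩ := isCompact_Icc.exists_bound_of_continuousOn hS.continuousOn_a
  have hlim : Tendsto (fun n : ℕ ↦ Real.cosh (∫ v in 0..s, ‖k v‖) +
      C * ((∫ v in 0..s, ‖k v‖) ^ (2 * n) / (2 * n).factorial)) atTop
      (𝓝 (Real.cosh (∫ v in 0..s, ‖k v‖) + C * 0)) :=
    tendsto_const_nhds.add (((FloorSemiring.tendsto_pow_div_factorial_atTop _).comp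
      (tendsto_id.const_mul_atTop' two_pos)).const_mul C)
  simpa using ge_of_tendsto' hlim fun n ↦ hS.norm_a_le_cosh_add hC n hs

theorem norm_b_sub_integral_le (hS : SolvesNLFTSystem k a b t) (ht : 0 ≤ t) :
    ‖b t - ∫ s in 0..t, k s‖ ≤ Real.sinh (∫ s in 0..t, ‖k s‖) - ∫ s in 0..t, ‖k s‖ := by
  have hb : ∀ s ∈ Icc 0 t, ‖b s‖ ≤ Real.sinh (∫ v in 0..s, ‖k v‖) := fun s hs ↦ by
    simpa using hS.norm_b_le 0 0 (fun u hu ↦ by simpa using hS.norm_a_le_cosh hu) hs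
  have ha1 : ∀ s ∈ Icc 0 t, ‖a s - 1‖ ≤ Real.cosh (∫ v in 0..s, ‖k v‖) - 1 := fun s hs ↦ by
    simpa using hS.norm_a_sub_one_le 0 0 (fun u hu ↦ by simpa using hb u hu) hs
  have hb_eq := intervalIntegral.sub_eq_integral_mul_conj_of_hasDerivAt hS.intervalIntegrable
    hS.continuousOn_a hS.hasDerivAt_b ⟨ht, le_rfl⟩
  rw [hS.b_zero, sub_zero] at hb_eq
  have hw : ContinuousOn (fun s ↦ conj (a s - 1)) (Icc 0 t) :=
    continuous_conj.comp_continuousOn (hS.continuousOn_a.sub continuousOn_const)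
  have hrep : b t - ∫ s in 0..t, k s = ∫ s in 0..t, k s * conj (a s - 1) := by
    rw [hb_eq, ← intervalIntegral.integral_sub _ hS.intervalIntegrable]
    · simp only [map_sub, map_one, mul_sub, mul_one]
    · exact hS.intervalIntegrable.mul_continuousOn
        (continuous_conj.comp_continuousOn (uIcc_of_le ht ▸ hS.continuousOn_a))
  rw [hrep]
  simpa only [Real.sinh_zero, sub_zero] using
    intervalIntegral.norm_integral_mul_le_of_norm_le_comp_primitive
      (h := fun y ↦ Real.sinh y - y) (h' := fun y ↦ Real.cosh y - 1) ht hS.intervalIntegrable hw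
      (fun y ↦ (Real.hasDerivAt_sinh y).sub (hasDerivAt_id y)) (by fun_prop)
      (fun u hu ↦ by simpa only [RCLike.norm_conj] using ha1 u hu)

end SolvesNLFTSystem

/-- linearization of the nonlinear Fourier transform: `b` agrees with
the (conjugate-modulated) partial Fourier integral of `f` to third order. -/
theorem b_is_fourier_transform_to_third_order
    (x : ℝ) (f a b : ℝ → ℂ)
    (hf : LocallyIntegrableOn f (Set.Ici 0))
    (ha : ∀ t : ℝ, 0 ≤ t → HasDerivAt a
      (Complex.exp (2 * Complex.I * (x : ℂ) * (t : ℂ)) *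
        (starRingEnd ℂ) (f t) * (starRingEnd ℂ) (b t)) t)
    (hb : ∀ t : ℝ, 0 ≤ t → HasDerivAt b
      (Complex.exp (2 * Complex.I * (x : ℂ) * (t : ℂ)) *
        (starRingEnd ℂ) (f t) * (starRingEnd ℂ) (a t)) t)
    (ha0 : a 0 = 1) (hb0 : b 0 = 0) :
    ∀ t : ℝ, 0 ≤ t →
      Norm.norm (b t - ∫ s in (0:ℝ)..t,
          Complex.exp (2 * Complex.I * (x : ℂ) * (s : ℂ)) * (starRingEnd ℂ) (f s)) ≤
        Real.sinh (∫ s in (0:ℝ)..t, Norm.norm (f s)) -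
          (∫ s in (0:ℝ)..t, Norm.norm (f s)) ∧
      ((∫ s in (0:ℝ)..t, Norm.norm (f s)) ≤ 1 →
        Norm.norm (b t - ∫ s in (0:ℝ)..t,
            Complex.exp (2 * Complex.I * (x : ℂ) * (s : ℂ)) * (starRingEnd ℂ) (f s)) ≤
          (∫ s in (0:ℝ)..t, Norm.norm (f s)) ^ 3) := by
  intro t ht
  set k : ℝ → ℂ := fun s ↦ Complex.exp (2 * Complex.I * (x : ℂ) * (s : ℂ)) * conj (f s)
  have hfi : IntervalIntegrable f volume 0 t :=
    (hf.integrableOn_compact_subset (uIcc_of_le ht ▸ fun _ hu ↦ hu.1)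
      isCompact_uIcc).intervalIntegrable
  have hconj : IntervalIntegrable (fun s ↦ conj (f s)) volume 0 t :=
    intervalIntegrable_iff.2
      (conjCLE.toContinuousLinearMap.integrable_comp (intervalIntegrable_iff.1 hfi))
  have hS : SolvesNLFTSystem k a b t :=
    ⟨hconj.continuousOn_mul (by fun_prop), fun s hs ↦ ha s hs.1, fun s hs ↦ hb s hs.1, ha0, hb0⟩
  have hnorm : ∫ s in (0:ℝ)..t, ‖f s‖ = ∫ s in (0:ℝ)..t, ‖k s‖ :=
    intervalIntegral.integral_congr fun s _ ↦ by simp [k, Complex.norm_exp]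
  have hF : 0 ≤ ∫ s in (0:ℝ)..t, ‖k s‖ :=
    intervalIntegral.integral_nonneg ht fun _ _ ↦ norm_nonneg _
  have hmain := hS.norm_b_sub_integral_le ht
  rw [hnorm]
  exact ⟨hmain, fun h1 ↦ hmain.trans (Real.sinh_sub_self_le_pow_three hF h1)⟩
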